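/- arXiv:0811.0740 — 3 statements merged into one kernel-verified Lean document; each statement's English description precedes it below -/
import Mathlib

section
/- For every permutation p of length n, the integers n+1 and c(G(p)) have the same parity. -/
open Equiv

/-- The setoid on `α` whose classes are the cycles (orbits) of the permutation `p`. -/
def Equiv.Perm.sameCycleSetoid {α : Type*} (p : Equiv.Perm α) : Setoid α :=
  ⟨p.SameCycle, Equiv.Perm.SameCycle.refl p, fun h => h.symm, fun h h' => h.trans h'⟩

/-- The number of cycles (orbits, including fixed points) of a permutation. -/
noncomputable def numCycles {α : Type*} (p : Equiv.Perm α) : ℕ :=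
  Nat.card (Quotient p.sameCycleSetoid)

section Aux
variable {α : Type*} [Fintype α] [DecidableEq α]

noncomputable def cycEquiv (σ : Equiv.Perm α) :
    Quotient σ.sameCycleSetoid ≃ ({x : α // σ x = x} ⊕ σ.cycleFactorsFinset) := by
  have fixcls : ∀ {x y : α}, σ.SameCycle x y → σ x = x → y = x := by
    rintro x y ⟨k, hk⟩ hx
    rw [← hk, Equiv.Perm.zpow_apply_eq_self_of_apply_eq_self hx]
  refine Equiv.ofBijective (Quotient.lift
    (fun x => if h : σ x = x then Sum.inl ⟨x, h⟩ else
      Sum.inr ⟨σ.cycleOf x, Equiv.Perm.cycleOf_mem_cycleFactorsFinset_iff.2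
        (Equiv.Perm.mem_support.2 h)⟩) ?_) ⟨?_, ?_⟩
  · rintro x y (hxy : σ.SameCycle x y)
    by_cases hx : σ x = x
    · have : y = x := fixcls hxy hx
      subst this; simp
    · have hy : ¬ σ y = y := fun hy => hx ((fixcls hxy.symm hy) ▸ hy)
      simp only [dif_neg hx, dif_neg hy, Sum.inr.injEq, Subtype.mk.injEq]
      exact hxy.cycleOf_eq
  · refine fun a b => Quotient.inductionOn₂ a b fun x y h => Quotient.sound ?_
    rw [Quotient.lift_mk, Quotient.lift_mk] at h
    by_cases hx : σ x = x
    · rw [dif_pos hx] at h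
      by_cases hy : σ y = y
      · rw [dif_pos hy] at h
        obtain rfl : x = y := by simpa using h
        exact Equiv.Perm.SameCycle.refl σ x
      · rw [dif_neg hy] at h; exact absurd h (by simp)
    · rw [dif_neg hx] at h
      by_cases hy : σ y = y
      · rw [dif_pos hy] at h; exact absurd h (by simp)
      · rw [dif_neg hy] at h
        have hcyc : σ.cycleOf x = σ.cycleOf y := by simpa using h
        have : y ∈ (σ.cycleOf x).support := by
          rw [hcyc, Equiv.Perm.mem_support_cycleOf_iff]
          exact ⟨Equiv.Perm.SameCycle.refl σ y, Equiv.Perm.mem_support.2 hy⟩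
        exact (Equiv.Perm.mem_support_cycleOf_iff.1 this).1
  · rintro (⟨x, hx⟩ | ⟨c, hc⟩)
    · exact ⟨⟦x⟧, by simp [hx]⟩
    · have hcyc := (Equiv.Perm.mem_cycleFactorsFinset_iff.1 hc).1
      obtain ⟨x, hxc⟩ := hcyc.nonempty_support
      have hx : x ∈ σ.support := by
        rw [Equiv.Perm.mem_support]
        rw [Equiv.Perm.mem_support] at hxc
        rwa [(Equiv.Perm.mem_cycleFactorsFinset_iff.1 hc).2 x (by
          rwa [Equiv.Perm.mem_support])] at hxc
      refine ⟨⟦x⟧, ?_⟩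
      simp only [Quotient.lift_mk, dif_neg (Equiv.Perm.mem_support.1 hx)]
      congr 1
      exact Subtype.ext (Equiv.Perm.cycle_is_cycleOf hxc hc).symm

theorem numCycles_eq (σ : Equiv.Perm α) :
    numCycles σ = Fintype.card {x : α // σ x = x} + σ.cycleFactorsFinset.card := by
  rw [numCycles, Nat.card_congr (cycEquiv σ), Nat.card_eq_fintype_card, Fintype.card_sum,
    Fintype.card_coe]

end Aux


theorem parity_numCycles {m : ℕ} (σ : Equiv.Perm (Fin m)) (hsign : Equiv.Perm.sign σ = 1) :
    m % 2 = numCycles σ % 2 := by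
  have h1 : Even (σ.cycleType.sum + Multiset.card σ.cycleType) := by
    rw [Equiv.Perm.sign_of_cycleType] at hsign
    exact (neg_one_pow_eq_one_iff_even (by decide : (-1 : ℤˣ) ≠ 1)).1 hsign
  have h2 : σ.cycleType.sum = σ.support.card := Equiv.Perm.sum_cycleType σ
  have h3 : Multiset.card σ.cycleType = σ.cycleFactorsFinset.card := by
    rw [Equiv.Perm.cycleType_def, Multiset.card_map]; rfl
  have h4 : numCycles σ = Fintype.card {x : Fin m // σ x = x} + σ.cycleFactorsFinset.card :=
    numCycles_eq σ
  have h5 : Fintype.card {x : Fin m // σ x = x} = m - σ.support.card := by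
    have e : Fintype.card {x : Fin m // σ x = x} = Fintype.card (Function.fixedPoints σ) :=
      Fintype.card_congr (Equiv.subtypeEquivRight fun x => Iff.rfl)
    rw [e, Equiv.Perm.card_fixedPoints, h2, Fintype.card_fin]
  have h6 : σ.support.card ≤ m := by
    simpa using Finset.card_le_univ σ.support
  rw [h2, h3] at h1
  obtain ⟨k, hk⟩ := h1
  omega


/-- `p` is a full cycle (an `n`-cycle on an `n`-element set): all points lie on one cycle. -/
def IsFullCycle {α : Type*} (p : Equiv.Perm α) : Prop := ∀ i j, p.SameCycle i j

/-- Extension of a permutation of `{1,…,n}` (modelled on `Fin n`) to `{0,1,…,n}`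
(modelled on `Fin (n+1)`), fixing `0`:  `i+1 ↦ p i + 1`. -/
noncomputable def extShift {n : ℕ} (p : Equiv.Perm (Fin n)) : Equiv.Perm (Fin (n + 1)) :=
  p.viaFintypeEmbedding (Fin.succEmb n)

/-- The permutation of `{0,1,…,n}` whose cycles are exactly the alternating cycles of the
cycle graph `G(p)`: following the black edge ending at `p̂(i-1)` and the gray edge to
`p̂(i-1)+1`, the next black edge is the one indexed by `p̂⁻¹(p̂(i-1)+1)` (arithmetic mod `n+1`,
with `p̂ = extShift p` the extension of `p` fixing `0`). -/
noncomputable def cycleGraphPerm {n : ℕ} (p : Equiv.Perm (Fin n)) : Equiv.Perm (Fin (n + 1)) :=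
  (extShift p)⁻¹ * Equiv.addRight 1 * extShift p * (Equiv.addRight (1 : Fin (n + 1)))⁻¹

/-- `c(G(p))`: the number of alternating cycles of the cycle graph of `p`. -/
noncomputable def cG {n : ℕ} (p : Equiv.Perm (Fin n)) : ℕ :=
  numCycles (cycleGraphPerm p)

/-- For every permutation `p` of length `n`, the integers `n + 1` and `c(G(p))` have the
same parity. -/
theorem parity_cG {n : ℕ} (p : Equiv.Perm (Fin n)) : (n + 1) % 2 = cG p % 2 := by
  have hsign : Equiv.Perm.sign (cycleGraphPerm p) = 1 := by
    rw [cycleGraphPerm, map_mul, map_mul, map_mul, map_inv, map_inv]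
    generalize Equiv.Perm.sign (extShift p) = a
    generalize Equiv.Perm.sign (Equiv.addRight (1 : Fin (n + 1))) = b
    rw [mul_assoc, mul_mul_mul_comm, inv_mul_cancel, mul_inv_cancel, one_mul]
  exact parity_numCycles (cycleGraphPerm p) hsign
end

section
/- The Hultman number S_H(n,k), defined as the number of n-permutations p with c(G(p)) = k, equals the number of (n+1)-cycles q in S_{n+1} such that the product (1 2 ... n (n+1))·q has exactly k cycles. -/
open Equiv

/-- The Hultman number `S_H(n,k)`: the number of `n`-permutations `p` with `c(G(p)) = k`. -/
noncomputable def hultman (n k : ℕ) : ℕ :=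
  Nat.card {p : Equiv.Perm (Fin n) // cG p = k}

/-!
With `r = finRotate (n + 1)` and `σ = extShift p`, the permutation `q = σ⁻¹ r⁻¹ σ` satisfies
`r q = (cycleGraphPerm p)⁻¹`, so `r q` has `c(G(p))` cycles. The map `p ↦ q` is a bijection onto
the full cycles: every full cycle is conjugate to `r⁻¹`, a conjugator can be made to fix `0` by
composing it with a power of `r`, and two conjugators fixing `0` differ by a permutation that
commutes with `r` and fixes `0`, hence is the identity.
-/

open Perm

lemma numCycles_inv {α : Type*} (p : Perm α) : numCycles p⁻¹ = numCycles p := by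
  have h : p⁻¹.sameCycleSetoid = p.sameCycleSetoid := Setoid.ext fun _ _ => sameCycle_inv
  rw [numCycles, h, numCycles]

section FullCycle

variable {α : Type*} {f g : Perm α}

lemma isFullCycle_of_subsingleton [Subsingleton α] (f : Perm α) : IsFullCycle f :=
  fun i j => Subsingleton.elim i j ▸ SameCycle.refl f i

lemma isFullCycle_iff [Fintype α] [DecidableEq α] [Nontrivial α] :
    IsFullCycle f ↔ f.IsCycle ∧ f.support = Finset.univ := by
  constructor
  · intro hf
    have hmoved (x : α) : f x ≠ x := by
      intro hx
      obtain ⟨y, hy⟩ := exists_ne x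
      obtain ⟨k, hk⟩ := hf x y
      exact hy (hk ▸ zpow_apply_eq_self_of_apply_eq_self hx k)
    let x := Classical.arbitrary α
    exact ⟨⟨x, hmoved x, fun y _ => hf x y⟩,
      Finset.eq_univ_of_forall fun x => mem_support.2 (hmoved x)⟩
  · rintro ⟨hcycle, hsupport⟩ x y
    have hmoved (z : α) : f z ≠ z := mem_support.1 (hsupport ▸ Finset.mem_univ z)
    exact hcycle.sameCycle (hmoved x) (hmoved y)

namespace IsFullCycle

lemma inv (hf : IsFullCycle f) : IsFullCycle f⁻¹ := fun x y => (hf x y).inv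

lemma conj (hf : IsFullCycle f) (σ : Perm α) : IsFullCycle (σ⁻¹ * f * σ) := fun x y => by
  simpa using (sameCycle_conj (g := σ⁻¹)).2 (hf (σ x) (σ y))

lemma isConj [Finite α] (hf : IsFullCycle f) (hg : IsFullCycle g) : IsConj f g := by
  classical
  have := Fintype.ofFinite α
  rcases subsingleton_or_nontrivial α with _ | _
  · rw [Subsingleton.elim f g]
  · obtain ⟨hf, hf_support⟩ := isFullCycle_iff.1 hf
    obtain ⟨hg, hg_support⟩ := isFullCycle_iff.1 hg
    exact hf.isConj hg (by rw [hf_support, hg_support])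

lemma eq_one_of_commute (hf : IsFullCycle f) (hc : Commute f g) {a : α} (ha : g a = a) :
    g = 1 := by
  ext x
  obtain ⟨k, rfl⟩ := hf a x
  rw [← mul_apply, ← (hc.zpow_left k).eq, mul_apply, ha, one_apply]

lemma conj_injOn_fixing (hf : IsFullCycle f) {a : α} {σ τ : Perm α} (hσ : σ a = a)
    (hτ : τ a = a) (h : σ⁻¹ * f * σ = τ⁻¹ * f * τ) : σ = τ := by
  have hc : Commute f (τ * σ⁻¹) := by
    calc f * (τ * σ⁻¹) = τ * (τ⁻¹ * f * τ) * σ⁻¹ := by group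
      _ = τ * (σ⁻¹ * f * σ) * σ⁻¹ := by rw [h]
      _ = τ * σ⁻¹ * f := by group
  have hfix : (τ * σ⁻¹) a = a := by
    rw [mul_apply, inv_eq_iff_eq.2 hσ.symm, hτ]
  exact (mul_inv_eq_one.1 (hf.eq_one_of_commute hc hfix)).symm

lemma exists_fixing_conj_eq [Finite α] (hf : IsFullCycle f) (hg : IsFullCycle g) (a : α) :
    ∃ σ, σ a = a ∧ σ⁻¹ * f * σ = g := by
  obtain ⟨c, rfl⟩ := isConj_iff.1 (hf.isConj hg)
  obtain ⟨k, hk⟩ := hf (c⁻¹ a) a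
  exact ⟨f ^ k * c⁻¹, hk, by group⟩

noncomputable def fixingConjEquiv [Finite α] (hf : IsFullCycle f) (a : α) :
    {σ : Perm α // σ a = a} ≃ {g : Perm α // IsFullCycle g} :=
  Equiv.ofBijective (fun σ => ⟨σ.1⁻¹ * f * σ.1, hf.conj σ.1⟩)
    ⟨fun σ τ h => Subtype.ext (hf.conj_injOn_fixing σ.2 τ.2 (congrArg Subtype.val h)),
      fun g =>
        let ⟨σ, hσ, h⟩ := hf.exists_fixing_conj_eq g.2 a
        ⟨⟨σ, hσ⟩, Subtype.ext h⟩⟩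

end IsFullCycle

end FullCycle

lemma isFullCycle_finRotate : ∀ n, IsFullCycle (finRotate n)
  | 0 | 1 => isFullCycle_of_subsingleton _
  | _ + 2 => isFullCycle_iff.2 ⟨isCycle_finRotate, support_finRotate⟩

section ExtShift

variable {n : ℕ}

lemma extShift_eq_decomposeFin_symm (p : Perm (Fin n)) :
    extShift p = decomposeFin.symm (0, p) := by
  ext i : 1
  refine Fin.cases ?_ (fun i => ?_) i
  · rw [decomposeFin_symm_apply_zero]
    refine p.viaFintypeEmbedding_apply_notMem_range (Fin.succEmb n) ?_
    rintro ⟨i, hi⟩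
    exact Fin.succ_ne_zero i hi
  · rw [decomposeFin_symm_apply_succ, swap_self, refl_apply]
    exact p.viaFintypeEmbedding_apply_image (Fin.succEmb n) i

lemma extShift_apply_zero (p : Perm (Fin n)) : extShift p 0 = 0 := by
  rw [extShift_eq_decomposeFin_symm, decomposeFin_symm_apply_zero]

lemma extShift_injective : Function.Injective (extShift (n := n)) := fun p q h => by
  simpa [extShift_eq_decomposeFin_symm] using h

lemma exists_extShift_eq {σ : Perm (Fin (n + 1))} (hσ : σ 0 = 0) : ∃ p, extShift p = σ := by
  obtain ⟨⟨a, p⟩, rfl⟩ := decomposeFin.symm.surjective σ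
  rw [decomposeFin_symm_apply_zero] at hσ
  exact ⟨p, by rw [extShift_eq_decomposeFin_symm, hσ]⟩

variable (n) in
noncomputable def extShiftEquiv : Perm (Fin n) ≃ {σ : Perm (Fin (n + 1)) // σ 0 = 0} :=
  Equiv.ofBijective (fun p => ⟨extShift p, extShift_apply_zero p⟩)
    ⟨fun _ _ h => extShift_injective (congrArg Subtype.val h),
      fun σ => (exists_extShift_eq σ.2).imp fun _ h => Subtype.ext h⟩

end ExtShift

lemma inv_cycleGraphPerm {n : ℕ} (p : Perm (Fin n)) :
    (cycleGraphPerm p)⁻¹ =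
      finRotate (n + 1) * ((extShift p)⁻¹ * (finRotate (n + 1))⁻¹ * extShift p) := by
  have hrot : finRotate (n + 1) = Equiv.addRight 1 := Equiv.ext finRotate_apply
  rw [cycleGraphPerm, hrot]
  group

/-- **Doignon–Labarre.**  The Hultman number `S_H(n,k)` equals the number of `(n+1)`-cycles
`q` in `S_{n+1}` such that the product of the long cycle `(1 2 … (n+1))` (modelled by
`finRotate (n+1)`) with `q` has exactly `k` cycles. -/
theorem hultman_eq_card_cycles (n k : ℕ) :
    hultman n k =
      Nat.card {q : Equiv.Perm (Fin (n + 1)) //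
        IsFullCycle q ∧ numCycles (finRotate (n + 1) * q) = k} := by
  let e := (extShiftEquiv n).trans ((isFullCycle_finRotate (n + 1)).inv.fixingConjEquiv 0)
  have he (p : Perm (Fin n)) : numCycles (finRotate (n + 1) * (e p).1) = cG p := by
    rw [cG, ← numCycles_inv (cycleGraphPerm p), inv_cycleGraphPerm]
    rfl
  exact Nat.card_congr ((e.subtypeEquiv fun p => by rw [he]).trans
    (Equiv.subtypeSubtypeEquivSubtypeInter _ _))
end

section
/- For a uniformly random permutation p of {1,...,n} (n ≥ 2) and fixed distinct i, j in {1,...,n}, the probability that i and j lie in the same cycle of p is exactly 1/2. -/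
open Equiv

set_option linter.unusedSectionVars false
set_option linter.unusedVariables false


section key
variable {α : Type*} [DecidableEq α]

private lemma pow_fix (f : Perm α) {x : α} {a : ℕ} (h : (f ^ a) x = x) (b : ℕ) :
    (f ^ (a * b)) x = x := by
  induction b with
  | zero => simp
  | succ b ih => rw [Nat.mul_succ, pow_add, Perm.mul_apply, h, ih]

private lemma pow_mod (f : Perm α) {x : α} {a : ℕ} (h : (f ^ a) x = x) (k : ℕ) :
    (f ^ k) x = (f ^ (k % a)) x := by
  conv_lhs => rw [← Nat.div_add_mod k a, Nat.add_comm, pow_add, Perm.mul_apply,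
    pow_fix f h (k / a)]

private lemma aux_pow (p : Perm α) (i j : α) (m : ℕ)
    (h : ∀ l, 0 < l → l < m → (p ^ l) i ≠ i ∧ (p ^ l) i ≠ j) :
    ∀ k < m, ((Equiv.swap i j * p) ^ k) i = (p ^ k) i := by
  intro k hk
  induction k with
  | zero => simp
  | succ k ih =>
    rw [pow_succ', pow_succ', Perm.mul_apply, Perm.mul_apply,
      ih (lt_trans (Nat.lt_succ_self k) hk), Perm.mul_apply]
    have := h (k + 1) (Nat.succ_pos k) hk
    rw [pow_succ', Perm.mul_apply] at this
    exact Equiv.swap_apply_of_ne_of_ne this.1 this.2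

variable [Fintype α]

lemma merge_lemma (p : Perm α) (i j : α) (hij : i ≠ j) (h : ¬ p.SameCycle i j) :
    (Equiv.swap i j * p).SameCycle i j := by
  have hex : ∃ m, 0 < m ∧ (p ^ m) i = i :=
    ⟨orderOf p, orderOf_pos p, by rw [pow_orderOf_eq_one]; rfl⟩
  classical
  obtain ⟨m, ⟨hm0, hmfix⟩, hmin⟩ : ∃ m, (0 < m ∧ (p ^ m) i = i) ∧
      ∀ l < m, ¬(0 < l ∧ (p ^ l) i = i) :=
    ⟨Nat.find hex, Nat.find_spec hex, fun l hl => Nat.find_min hex hl⟩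
  have haux : ∀ l, 0 < l → l < m → (p ^ l) i ≠ i ∧ (p ^ l) i ≠ j := by
    intro l hl0 hlm
    constructor
    · intro he
      exact hmin l hlm ⟨hl0, he⟩
    · intro he
      exact h ⟨(l : ℤ), by rw [zpow_natCast]; exact he⟩
  refine ⟨(m : ℤ), ?_⟩
  rw [zpow_natCast]
  obtain ⟨m', rfl⟩ : ∃ m', m = m' + 1 := ⟨m - 1, (Nat.succ_pred_eq_of_pos hm0).symm⟩
  rw [pow_succ', Perm.mul_apply, aux_pow p i j _ haux m' (Nat.lt_succ_self m'),
    Perm.mul_apply]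
  rw [pow_succ', Perm.mul_apply] at hmfix
  rw [hmfix, Equiv.swap_apply_left]

lemma split_lemma (p : Perm α) (i j : α) (hij : i ≠ j) (h : p.SameCycle i j) :
    ¬ (Equiv.swap i j * p).SameCycle i j := by
  classical
  have hex : ∃ m, 0 < m ∧ (p ^ m) i = j := by
    obtain ⟨k, hk0, _, hk⟩ := h.exists_pow_eq''
    exact ⟨k, hk0, hk⟩
  obtain ⟨m, ⟨hm0, hmj⟩, hmin⟩ : ∃ m, (0 < m ∧ (p ^ m) i = j) ∧
      ∀ l < m, ¬(0 < l ∧ (p ^ l) i = j) :=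
    ⟨Nat.find hex, Nat.find_spec hex, fun l hl => Nat.find_min hex hl⟩
  have haux : ∀ l, 0 < l → l < m → (p ^ l) i ≠ i ∧ (p ^ l) i ≠ j := by
    intro l hl0 hlm
    constructor
    · intro he
      have h1 : (p ^ (m % l)) i = j := by rw [← pow_mod p he m, hmj]
      rcases Nat.eq_zero_or_pos (m % l) with h0 | h0
      · rw [h0, pow_zero] at h1; exact hij h1
      · exact hmin _ (lt_trans (Nat.mod_lt m hl0) hlm) ⟨h0, h1⟩
    · intro he
      exact hmin l hlm ⟨hl0, he⟩
  set q := Equiv.swap i j * p with hq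
  have hqm : (q ^ m) i = i := by
    obtain ⟨m', rfl⟩ : ∃ m', m = m' + 1 := ⟨m - 1, (Nat.succ_pred_eq_of_pos hm0).symm⟩
    rw [pow_succ', Perm.mul_apply, aux_pow p i j _ haux m' (Nat.lt_succ_self m'), hq,
      Perm.mul_apply]
    rw [pow_succ', Perm.mul_apply] at hmj
    rw [hmj, Equiv.swap_apply_right]
  intro hc
  obtain ⟨k, _, hk⟩ := hc.exists_pow_eq'
  rw [pow_mod q hqm k] at hk
  have hlt : k % m < m := Nat.mod_lt k hm0
  rcases Nat.eq_zero_or_pos (k % m) with h0 | h0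
  · rw [h0, pow_zero] at hk; exact hij hk
  · rw [aux_pow p i j _ haux _ hlt] at hk
    exact (haux _ h0 hlt).2 hk

lemma toggle (p : Perm α) (i j : α) (hij : i ≠ j) :
    (Equiv.swap i j * p).SameCycle i j ↔ ¬ p.SameCycle i j := by
  constructor
  · intro hq hp
    exact split_lemma p i j hij hp hq
  · exact merge_lemma p i j hij

end key

/-- For a uniformly random permutation `p` of `{1,…,n}` (`n ≥ 2`) and fixed distinct
`i, j ∈ {1,…,n}`, the probability that `i` and `j` lie in the same cycle of `p` is exactly
`1/2`: twice the number of permutations with `i, j` on a common cycle is `n!`. -/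
theorem same_cycle_probability_all_perms (n : ℕ) (hn : 2 ≤ n) (i j : Fin n) (hij : i ≠ j) :
    2 * Nat.card {p : Equiv.Perm (Fin n) // p.SameCycle i j} = Nat.factorial n := by
  classical
  have e : {p : Perm (Fin n) // p.SameCycle i j} ≃ {p : Perm (Fin n) // ¬ p.SameCycle i j} :=
    { toFun := fun x => ⟨Equiv.swap i j * x.1, split_lemma x.1 i j hij x.2⟩
      invFun := fun x => ⟨Equiv.swap i j * x.1, merge_lemma x.1 i j hij x.2⟩
      left_inv := fun x => by
        ext1; simp [← mul_assoc, Equiv.swap_mul_self]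
      right_inv := fun x => by
        ext1; simp [← mul_assoc, Equiv.swap_mul_self] }
  have hc : Fintype.card {p : Perm (Fin n) // ¬ p.SameCycle i j} =
      Fintype.card {p : Perm (Fin n) // p.SameCycle i j} := (Fintype.card_congr e).symm
  have hcompl := Fintype.card_subtype_compl (fun p : Perm (Fin n) => p.SameCycle i j)
  rw [hc] at hcompl
  have hle : Fintype.card {p : Perm (Fin n) // p.SameCycle i j} ≤
      Fintype.card (Perm (Fin n)) := Fintype.card_subtype_le _
  rw [Nat.card_eq_fintype_card]
  have : Fintype.card (Perm (Fin n)) = Nat.factorial n := by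
    rw [Fintype.card_perm, Fintype.card_fin]
  omega
end
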